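/- There is an absolute constant C with the following property. Let v : ℝ → ℝ be twice continuously differentiable with v'(x) ≥ δ > 0 for all x and ‖v''‖_∞ ≤ M < ∞. For h > 0, set x_ν = νh, I_ν = [x_ν − h/2, x_ν + h/2), let v̄_ν := (1/h)∫_{I_ν} v(y) dy be the exact cell averages, and let P_h v(x) := v̄_ν + mm(v̄_{ν+1} − v̄_ν, v̄_ν − v̄_{ν−1})·(x − x_ν)/h for x ∈ I_ν be the piecewise-linear minmod reconstruction. Then sup_{x∈ℝ} |P_h v(x) − v(x)| ≤ C·M·h². That is, the minmod reconstruction is second-order accurate in regions of smooth monotone data. -/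

import Mathlib

/-!
Each exact cell average differs from the value at the cell centre by `O(M h²)`, since the linear
Taylor term averages out; consequently both one-sided differences of cell averages equal
`h v'(x_ν) + O(M h²)`. The minmod of two numbers always lies between them, so the minmod slope
inherits this bound. On the cell, `|x - x_ν| ≤ h/2`, and the reconstruction error splits into the
error of the cell average, the slope error times `(x - x_ν)/h`, and the Taylor remainder at `x`.
-/

open MeasureTheory intervalIntegral

/-- The minmod function `mm(z₁,z₂) = ((sgn z₁ + sgn z₂)/2)·min(|z₁|,|z₂|)`. -/
noncomputable def minmod (z₁ z₂ : ℝ) : ℝ :=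
  ((Real.sign z₁ + Real.sign z₂) / 2) * min |z₁| |z₂|

/-- Exact cell average of `v` over the cell `I_ν = [νh − h/2, νh + h/2)`. -/
noncomputable def cellAvg (h : ℝ) (v : ℝ → ℝ) (ν : ℤ) : ℝ :=
  (1 / h) * ∫ y in (ν * h - h / 2)..(ν * h + h / 2), v y

/-- The piecewise-linear minmod reconstruction from the exact cell averages of `v`:
for `x ∈ I_ν` (i.e. `ν = ⌊x/h + 1/2⌋`),
`P_h v(x) = v̄_ν + mm(v̄_{ν+1} − v̄_ν, v̄_ν − v̄_{ν−1})·(x − x_ν)/h`. -/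
noncomputable def minmodRecOf (h : ℝ) (v : ℝ → ℝ) (x : ℝ) : ℝ :=
  let ν : ℤ := ⌊x / h + 1 / 2⌋
  cellAvg h v ν +
    minmod (cellAvg h v (ν + 1) - cellAvg h v ν) (cellAvg h v ν - cellAvg h v (ν - 1)) *
      (x - ν * h) / h

theorem minmod_mem_uIcc (a b : ℝ) : minmod a b ∈ Set.uIcc a b := by
  rw [Set.mem_uIcc]
  rcases lt_trichotomy a 0 with ha | ha | ha <;> rcases lt_trichotomy b 0 with hb | hb | hb <;>
    simp only [minmod, Real.sign_of_neg, Real.sign_of_pos, Real.sign_zero, abs_of_neg,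
      abs_of_pos, abs_zero, ha, hb, min_def] <;> split_ifs <;>
    first | (left; constructor <;> linarith) | (right; constructor <;> linarith)

theorem abs_minmod_sub_le {a b t ε : ℝ} (ha : |a - t| ≤ ε) (hb : |b - t| ≤ ε) :
    |minmod a b - t| ≤ ε := by
  have hm := Set.mem_uIcc.mp (minmod_mem_uIcc a b)
  rw [abs_le] at ha hb ⊢
  constructor <;> rcases hm with hm | hm <;> linarith [hm.1, hm.2]

theorem abs_sub_floor_mul_le {h : ℝ} (hh : 0 < h) (x : ℝ) :
    |x - ⌊x / h + 1 / 2⌋ * h| ≤ h / 2 := by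
  have hlo := Int.floor_le (x / h + 1 / 2)
  have hhi := Int.lt_floor_add_one (x / h + 1 / 2)
  have hx : x / h * h = x := div_mul_cancel₀ x hh.ne'
  rw [abs_le]
  constructor <;> nlinarith

/-- The linear part `k * (y - c)` has mean zero over the interval centred at `c`. -/
theorem abs_centeredAverage_sub_le {f : ℝ → ℝ} {h c k ε : ℝ} (hh : 0 < h)
    (hf : IntervalIntegrable f volume (c - h / 2) (c + h / 2))
    (hε : ∀ y ∈ Set.Icc (c - h / 2) (c + h / 2), |f y - f c - k * (y - c)| ≤ ε) :
    |(1 / h) * (∫ y in (c - h / 2)..(c + h / 2), f y) - f c| ≤ ε := by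
  have hlin : IntervalIntegrable (fun y => f c + k * (y - c)) volume (c - h / 2) (c + h / 2) :=
    (by fun_prop : Continuous fun y => f c + k * (y - c)).intervalIntegrable _ _
  have hmean : ∫ y in (c - h / 2)..(c + h / 2), (f c + k * (y - c)) = h * f c := by
    rw [integral_add intervalIntegrable_const
        ((by fun_prop : Continuous fun y => k * (y - c)).intervalIntegrable _ _),
      intervalIntegral.integral_const, intervalIntegral.integral_const_mul,
      integral_comp_sub_right (fun y => y) c, integral_id, smul_eq_mul]
    ring
  have hrem : |∫ y in (c - h / 2)..(c + h / 2), (f y - (f c + k * (y - c)))| ≤ ε * h := by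
    have := norm_integral_le_of_norm_le_const (a := c - h / 2) (b := c + h / 2) (C := ε)
      (f := fun y => f y - (f c + k * (y - c))) fun y hy => by
        rw [Set.uIoc_of_le (by linarith)] at hy
        rw [Real.norm_eq_abs, ← sub_sub]
        exact hε y (Set.Ioc_subset_Icc_self hy)
    rwa [show |c + h / 2 - (c - h / 2)| = h by rw [abs_of_pos (by linarith)]; ring] at this
  rw [integral_sub hf hlin, hmean] at hrem
  calc |(1 / h) * (∫ y in (c - h / 2)..(c + h / 2), f y) - f c|
      = (1 / h) * |(∫ y in (c - h / 2)..(c + h / 2), f y) - h * f c| := by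
        rw [← abs_of_pos (one_div_pos.mpr hh), ← abs_mul, abs_of_pos (one_div_pos.mpr hh)]
        congr 1
        field_simp
    _ ≤ (1 / h) * (ε * h) := by gcongr
    _ = ε := by field_simp

theorem nonneg_of_abs_sub_le_mul_abs_sub {g : ℝ → ℝ} {M : ℝ}
    (hg : ∀ a b, |g b - g a| ≤ M * |b - a|) : 0 ≤ M := by
  simpa using (abs_nonneg _).trans (hg 0 1)

theorem abs_sub_sub_deriv_mul_le {v : ℝ → ℝ} {M : ℝ} (hv : Differentiable ℝ v)
    (hv' : ∀ a b, |deriv v b - deriv v a| ≤ M * |b - a|) (c y : ℝ) :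
    |v y - v c - deriv v c * (y - c)| ≤ M * (y - c) ^ 2 := by
  have hM := nonneg_of_abs_sub_le_mul_abs_sub hv'
  have hg : ∀ t, HasDerivAt (v - fun t => deriv v c * t) (deriv v t - deriv v c) t := fun t => by
    simpa using (hv t).hasDerivAt.sub ((hasDerivAt_id' t).const_mul (deriv v c))
  have hbound : ∀ t ∈ Set.uIcc c y, ‖deriv v t - deriv v c‖ ≤ M * |y - c| := fun t ht =>
    (hv' c t).trans (mul_le_mul_of_nonneg_left (Set.abs_sub_left_of_mem_uIcc ht) hM)
  have := (convex_uIcc c y).norm_image_sub_le_of_norm_hasDerivWithin_le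
    (fun t _ => (hg t).hasDerivWithinAt) hbound Set.left_mem_uIcc Set.right_mem_uIcc
  rw [Real.norm_eq_abs, Real.norm_eq_abs, mul_assoc, ← abs_mul, ← sq, abs_sq] at this
  convert this using 2
  simp only [Pi.sub_apply]
  ring

noncomputable def minmodSlope (h : ℝ) (v : ℝ → ℝ) (ν : ℤ) : ℝ :=
  minmod (cellAvg h v (ν + 1) - cellAvg h v ν) (cellAvg h v ν - cellAvg h v (ν - 1))

section CellAverages

variable {v : ℝ → ℝ} {M h : ℝ} (hv : Differentiable ℝ v)
  (hv' : ∀ a b, |deriv v b - deriv v a| ≤ M * |b - a|) (hh : 0 < h)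
include hv hv' hh

theorem abs_cellAvg_sub_le (ν : ℤ) : |cellAvg h v ν - v (ν * h)| ≤ M * h ^ 2 / 4 := by
  have hM := nonneg_of_abs_sub_le_mul_abs_sub hv'
  refine abs_centeredAverage_sub_le (k := deriv v (ν * h)) hh
    (hv.continuous.intervalIntegrable _ _) fun y hy => ?_
  have hy : (y - ν * h) ^ 2 ≤ (h / 2) ^ 2 := by
    rw [sq_le_sq, abs_of_pos (half_pos hh), abs_le]
    constructor <;> linarith [hy.1, hy.2]
  calc _ ≤ M * (y - ν * h) ^ 2 := abs_sub_sub_deriv_mul_le hv hv' _ y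
    _ ≤ M * h ^ 2 / 4 := by nlinarith

theorem abs_cellAvg_sub_cellAvg_sub_le (μ ν : ℤ) :
    |cellAvg h v μ - cellAvg h v ν - deriv v (ν * h) * (μ * h - ν * h)| ≤
      M * h ^ 2 / 2 + M * (μ * h - ν * h) ^ 2 := by
  have hμ := abs_cellAvg_sub_le hv hv' hh μ
  have hν := abs_cellAvg_sub_le hv hv' hh ν
  have hT := abs_sub_sub_deriv_mul_le hv hv' (ν * h) (μ * h)
  calc _ = |(cellAvg h v μ - v (μ * h)) - (cellAvg h v ν - v (ν * h)) +
          (v (μ * h) - v (ν * h) - deriv v (ν * h) * (μ * h - ν * h))| := by ring_nf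
    _ ≤ |cellAvg h v μ - v (μ * h)| + |cellAvg h v ν - v (ν * h)| +
          |v (μ * h) - v (ν * h) - deriv v (ν * h) * (μ * h - ν * h)| :=
        (abs_add_le _ _).trans (add_le_add_left (abs_sub _ _) _)
    _ ≤ _ := by linarith

theorem abs_minmodSlope_sub_le (ν : ℤ) :
    |minmodSlope h v ν - h * deriv v (ν * h)| ≤ 3 / 2 * M * h ^ 2 := by
  have hfwd := abs_cellAvg_sub_cellAvg_sub_le hv hv' hh (ν + 1) ν
  have hbwd := abs_cellAvg_sub_cellAvg_sub_le hv hv' hh (ν - 1) ν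
  push_cast at hfwd hbwd
  refine abs_minmod_sub_le ?_ ?_
  · convert hfwd using 2 <;> ring
  · rw [← abs_neg]
    convert hbwd using 2 <;> ring

theorem abs_cellAvg_add_minmodSlope_sub_le (ν : ℤ) {x : ℝ} (hx : |x - ν * h| ≤ h / 2) :
    |cellAvg h v ν + minmodSlope h v ν * (x - ν * h) / h - v x| ≤ 5 / 4 * M * h ^ 2 := by
  have hM := nonneg_of_abs_sub_le_mul_abs_sub hv'
  set c : ℝ := ν * h
  set s : ℝ := h * deriv v c
  have hmean := abs_cellAvg_sub_le hv hv' hh ν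
  have hslope : |(minmodSlope h v ν - s) * (x - c) / h| ≤ 3 / 4 * M * h ^ 2 := by
    rw [abs_div, abs_mul, abs_of_pos hh, div_le_iff₀ hh]
    calc |minmodSlope h v ν - s| * |x - c| ≤ 3 / 2 * M * h ^ 2 * (h / 2) :=
          mul_le_mul (abs_minmodSlope_sub_le hv hv' hh ν) hx (abs_nonneg _) (by positivity)
      _ = _ := by ring
  have htaylor : |v x - v c - deriv v c * (x - c)| ≤ M * h ^ 2 / 4 := by
    refine (abs_sub_sub_deriv_mul_le hv hv' c x).trans ?_
    have : (x - c) ^ 2 ≤ (h / 2) ^ 2 := by rw [← sq_abs]; gcongr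
    nlinarith
  have hsplit : cellAvg h v ν + minmodSlope h v ν * (x - c) / h - v x =
      (cellAvg h v ν - v c) + (minmodSlope h v ν - s) * (x - c) / h -
        (v x - v c - deriv v c * (x - c)) := by
    simp only [s]
    field_simp
    ring
  rw [hsplit]
  calc _ ≤ |cellAvg h v ν - v c| + |(minmodSlope h v ν - s) * (x - c) / h| +
        |v x - v c - deriv v c * (x - c)| :=
        (abs_sub _ _).trans (add_le_add_left (abs_add_le _ _) _)
    _ ≤ _ := by linarith

end CellAverages

theorem minmodRec_second_order_accurate :
    ∃ C : ℝ, ∀ (v : ℝ → ℝ), ContDiff ℝ 2 v →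
      ∀ δ : ℝ, 0 < δ → (∀ x : ℝ, δ ≤ deriv v x) →
      ∀ M : ℝ, (∀ x : ℝ, |deriv (deriv v) x| ≤ M) →
      ∀ h : ℝ, 0 < h →
      ∀ x : ℝ, |minmodRecOf h v x - v x| ≤ C * M * h ^ 2 := by
  refine ⟨5 / 4, fun v hv _ _ _ M hM h hh x => ?_⟩
  have hv' (a b : ℝ) : |deriv v b - deriv v a| ≤ M * |b - a| := by
    simpa using convex_univ.norm_image_sub_le_of_norm_deriv_le
      (fun y _ => hv.differentiable_deriv_two y) (fun y _ => hM y) (Set.mem_univ a) (Set.mem_univ b)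
  exact abs_cellAvg_add_minmodSlope_sub_le (hv.differentiable two_ne_zero) hv' hh _
    (abs_sub_floor_mul_le hh x)
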